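/- arXiv:2208.11216 — 2 statements merged into one kernel-verified Lean document; each statement's English description precedes it below -/
import Mathlib

section
/- Let (m_j)_{j∈ℕ} be a sequence of real numbers with m_j > m_{j+1} for all j and m_j → −∞ as j → ∞, and let (a_j)_{j∈ℕ} be symbols with a_j ∈ S^{m_j}(ℤⁿ×𝕋ⁿ) for each j. Then there exists a symbol a ∈ S^{m₁}(ℤⁿ×𝕋ⁿ) such that for every N ∈ ℕ the function (k,x) ↦ a(k,x) − Σ_{j<N} a_j(k,x) belongs to S^{m_N}(ℤⁿ×𝕋ⁿ). -/
open MeasureTheory Filter Topology ENNReal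

noncomputable section

/-- Discrete difference operator in the `j`-th coordinate. -/
def kdiff {n : ℕ} {M : Type*} [AddCommGroup M] (j : Fin n)
    (f : (Fin n → ℤ) → M) : (Fin n → ℤ) → M :=
  fun k => f (k + Pi.single j 1) - f k

/-- Iterated discrete difference operator `Δ_k^α`. -/
def kdiffM {n : ℕ} {M : Type*} [AddCommGroup M] (al : Fin n → ℕ)
    (f : (Fin n → ℤ) → M) : (Fin n → ℤ) → M :=
  (List.finRange n).foldr (fun j g => (kdiff j)^[al j] g) f

/-- The operator `D_{x_j}^{(l)} = ∏_{r=0}^{l-1} ((2πi)⁻¹ ∂_{x_j} - r)`. -/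
def DFact {n : ℕ} (j : Fin n) : ℕ → ((Fin n → ℝ) → ℂ) → ((Fin n → ℝ) → ℂ)
  | 0, f => f
  | (l + 1), f => fun x =>
      (2 * Real.pi * Complex.I)⁻¹ * fderiv ℝ (DFact j l f) x (Pi.single j 1)
        - (l : ℂ) * DFact j l f x

/-- The operator `D_x^{(β)} = D_{x_1}^{(β_1)} ⋯ D_{x_n}^{(β_n)}`. -/
def DFactM {n : ℕ} (be : Fin n → ℕ) (f : (Fin n → ℝ) → ℂ) : (Fin n → ℝ) → ℂ :=
  (List.finRange n).foldr (fun j g => DFact j (be j) g) f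

/-- Euclidean norm of a lattice point. -/
def knorm {n : ℕ} (k : Fin n → ℤ) : ℝ := Real.sqrt (∑ i, ((k i : ℝ)) ^ 2)

/-- The symbol class `S^m(ℤⁿ × 𝕋ⁿ)`: smooth and ℤⁿ-periodic in `x`, with
symbol estimates of order `m`. -/
def SymbolClass (n : ℕ) (m : ℝ) (a : (Fin n → ℤ) → (Fin n → ℝ) → ℂ) : Prop :=
  (∀ k, ContDiff ℝ (⊤ : ℕ∞) (a k)) ∧
  (∀ k x (v : Fin n → ℤ), a k (x + fun i => (v i : ℝ)) = a k x) ∧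
  (∀ al be : Fin n → ℕ, ∃ C > 0, ∀ k x,
    ‖DFactM be (kdiffM al a k) x‖ ≤
      C * (1 + knorm k) ^ (m - (∑ i, (al i : ℝ))))

/-- The elliptic symbol class `ES^m(ℤⁿ × 𝕋ⁿ)`. -/
def EllSymbolClass (n : ℕ) (m : ℝ) (a : (Fin n → ℤ) → (Fin n → ℝ) → ℂ) : Prop :=
  SymbolClass n m a ∧
  ∃ C > 0, ∃ R > 0, ∀ k x, R < knorm k →
    C * (1 + knorm k) ^ m ≤ ‖a k x‖

/-- The discrete Schwartz space `𝒮(ℤⁿ)`. -/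
def DiscreteSchwartz {n : ℕ} (u : (Fin n → ℤ) → ℂ) : Prop :=
  ∀ al be : Fin n → ℕ, ∃ C, ∀ k,
    ‖(∏ i, (k i : ℂ) ^ (al i)) * kdiffM be u k‖ ≤ C

/-- Discrete Fourier transform `û(x) = Σ_k e^{-2πik·x} u(k)`. -/
def dft {n : ℕ} (u : (Fin n → ℤ) → ℂ) (x : Fin n → ℝ) : ℂ :=
  ∑' k : Fin n → ℤ,
    Complex.exp (-(2 * Real.pi * Complex.I) * ((∑ i, (k i : ℝ) * x i : ℝ) : ℂ)) * u k

/-- The pseudo-differential operator `T_a`. -/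
def psiOp {n : ℕ} (a : (Fin n → ℤ) → (Fin n → ℝ) → ℂ)
    (u : (Fin n → ℤ) → ℂ) : (Fin n → ℤ) → ℂ :=
  fun k => ∫ x in Set.Icc (0 : Fin n → ℝ) 1,
    Complex.exp ((2 * Real.pi * Complex.I) * ((∑ i, (k i : ℝ) * x i : ℝ) : ℂ))
      * (a k x * dft u x)

/-- The `ℓ²`-pairing `(u, v) = Σ_k u(k) conj(v(k))`. -/
def l2inner {n : ℕ} (u v : (Fin n → ℤ) → ℂ) : ℂ :=
  ∑' k : Fin n → ℤ, u k * (starRingEnd ℂ) (v k)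

/-- Squared Sobolev sum `Σ_k (1+|k|²)^s |u(k)|²` valued in `ℝ≥0∞`. -/
def sobSum {n : ℕ} (s : ℝ) (u : (Fin n → ℤ) → ℂ) : ℝ≥0∞ :=
  ∑' k : Fin n → ℤ,
    ENNReal.ofReal ((1 + ∑ i, ((k i : ℝ)) ^ 2) ^ s * ‖u k‖ ^ 2)

/-- Membership in the discrete Sobolev space `H^s(ℤⁿ)`. -/
def MemSob {n : ℕ} (s : ℝ) (u : (Fin n → ℤ) → ℂ) : Prop :=
  sobSum s u < ⊤

/-- The Sobolev norm `‖u‖_{H^s}`. -/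
def sobNorm {n : ℕ} (s : ℝ) (u : (Fin n → ℤ) → ℂ) : ℝ :=
  Real.sqrt (sobSum s u).toReal

/-- `(u, w)` belongs to the closure (in `H^s × H^t`) of the graph of the operator
`B` with domain `𝒮(ℤⁿ)`. -/
def InGraphClosure {n : ℕ} (s t : ℝ)
    (B : ((Fin n → ℤ) → ℂ) → ((Fin n → ℤ) → ℂ))
    (u w : (Fin n → ℤ) → ℂ) : Prop :=
  ∃ v : ℕ → ((Fin n → ℤ) → ℂ),
    (∀ j, DiscreteSchwartz (v j)) ∧
    Tendsto (fun j => sobSum s (fun k => v j k - u k)) atTop (𝓝 0) ∧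
    Tendsto (fun j => sobSum t (fun k => B (v j) k - w k)) atTop (𝓝 0)

end

namespace AS

variable {n : ℕ} {M : Type*} [AddCommGroup M]

def shiftZ {n : ℕ} (γ : Fin n → ℕ) : Fin n → ℤ := fun i => (γ i : ℤ)

lemma list_sum_map_neg {α : Type*} (L : List α) (F : α → M) :
    (L.map fun p => -F p).sum = -(L.map F).sum := by
  induction L with
  | nil => simp
  | cons a l ih => simp [ih, neg_add]; abel

def Rep (T : ((Fin n → ℤ) → M) → ((Fin n → ℤ) → M)) (L : List (ℤ × (Fin n → ℕ))) : Prop :=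
  ∀ f k, T f k = (L.map (fun p => p.1 • f (k + shiftZ p.2))).sum

lemma rep_id : Rep (n := n) (M := M) id [(1, fun _ => 0)] := by
  intro f k
  have : k + shiftZ (fun _ => 0 : Fin n → ℕ) = k := by
    funext i; simp [shiftZ]
  simp [this]

lemma rep_kdiff_comp (j : Fin n) {T : ((Fin n → ℤ) → M) → ((Fin n → ℤ) → M)}
    {L : List (ℤ × (Fin n → ℕ))} (h : Rep T L) :
    Rep (fun f => kdiff j (T f))
      ((L.map (fun p => (p.1, p.2 + Pi.single j 1))) ++ L.map (fun p => (-p.1, p.2))) := by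
  intro f k
  have hsh : ∀ γ : Fin n → ℕ, shiftZ (γ + Pi.single j 1) = shiftZ γ + Pi.single j 1 := by
    intro γ; funext i; simp [shiftZ, Pi.single_apply]
  show T f (k + Pi.single j 1) - T f k = _
  rw [List.map_append, List.sum_append, List.map_map, List.map_map, h, h, sub_eq_add_neg]
  congr 1
  · congr 1
    apply List.map_congr_left
    intro p _
    simp only [Function.comp_apply, hsh]
    congr 2
    abel
  · rw [← list_sum_map_neg]
    congr 1
    apply List.map_congr_left
    intro p _
    simp [neg_smul]

lemma rep_iter (j : Fin n) (B : Fin n → ℕ) :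
    ∀ (mm : ℕ) (T : ((Fin n → ℤ) → M) → ((Fin n → ℤ) → M)) (L : List (ℤ × (Fin n → ℕ))),
    (∀ p ∈ L, ∀ i, p.2 i ≤ B i) → Rep T L →
    ∃ L', (∀ p ∈ L', ∀ i, p.2 i ≤ B i + (if i = j then mm else 0)) ∧
      Rep (fun f => (kdiff j)^[mm] (T f)) L' := by
  intro mm
  induction mm with
  | zero =>
    intro T L hb h
    exact ⟨L, by simpa using hb, by simpa using h⟩
  | succ mm ih =>
    intro T L hb h
    obtain ⟨L', hb', h'⟩ := ih T L hb h
    refine ⟨(L'.map (fun p => (p.1, p.2 + Pi.single j 1))) ++ L'.map (fun p => (-p.1, p.2)),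
      ?_, ?_⟩
    · intro p hp i
      rcases List.mem_append.1 hp with hp | hp
      · obtain ⟨q, hq, rfl⟩ := List.mem_map.1 hp
        have h1 := hb' q hq i
        rcases eq_or_ne i j with hij | hij
        · subst hij
          simp only [Pi.add_apply, Pi.single_eq_same, eq_self_iff_true, if_true] at h1 ⊢
          omega
        · simp only [Pi.add_apply, Pi.single_eq_of_ne hij, if_neg hij] at h1 ⊢
          omega
      · obtain ⟨q, hq, rfl⟩ := List.mem_map.1 hp
        have h1 := hb' q hq i
        rcases eq_or_ne i j with hij | hij
        · subst hij
          simp only [eq_self_iff_true, if_true] at h1 ⊢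
          omega
        · simp only [if_neg hij] at h1 ⊢
          omega
    · have hrep := rep_kdiff_comp j h'
      intro f k
      show (kdiff j)^[mm+1] (T f) k = _
      rw [Function.iterate_succ_apply' (kdiff j) mm (T f)]
      exact hrep f k

lemma rep_exists (al : Fin n → ℕ) (l : List (Fin n)) :
    ∃ L : List (ℤ × (Fin n → ℕ)), (∀ p ∈ L, ∀ i, p.2 i ≤ l.count i * al i) ∧
      Rep (M := M) (fun f => l.foldr (fun j g => (kdiff j)^[al j] g) f) L := by
  induction l with
  | nil =>
    exact ⟨[(1, fun _ => 0)], by simp, rep_id⟩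
  | cons j l ih =>
    obtain ⟨L, hb, h⟩ := ih
    obtain ⟨L', hb', h'⟩ := rep_iter j (fun i => l.count i * al i) (al j) _ L hb h
    refine ⟨L', ?_, h'⟩
    intro p hp i
    have h1 := hb' p hp i
    rcases eq_or_ne i j with hij | hij
    · subst hij
      have h2 : List.count i (i :: l) = List.count i l + 1 := by simp [List.count_cons]
      rw [h2, add_mul, one_mul]
      simp only [eq_self_iff_true, if_true] at h1
      omega
    · have h2 : List.count i (j :: l) = List.count i l := by simp [List.count_cons, hij, hij.symm]
      rw [h2]
      simp only [if_neg hij] at h1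
      exact h1

lemma kdiffM_rep (al : Fin n → ℕ) :
    ∃ L : List (ℤ × (Fin n → ℕ)), (∀ p ∈ L, ∀ i, p.2 i ≤ al i) ∧
      ∀ (f : (Fin n → ℤ) → M) (k), kdiffM al f k
        = (L.map (fun p => p.1 • f (k + shiftZ p.2))).sum := by
  obtain ⟨L, hb, h⟩ := rep_exists (M := M) al (List.finRange n)
  refine ⟨L, ?_, h⟩
  intro p hp i
  have := hb p hp i
  rwa [List.count_eq_one_of_mem (List.nodup_finRange n) (List.mem_finRange i), one_mul] at this





lemma DFact_succ (j : Fin n) (l : ℕ) (f : (Fin n → ℝ) → ℂ) :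
    DFact j (l + 1) f = fun x =>
      (2 * Real.pi * Complex.I)⁻¹ * fderiv ℝ (DFact j l f) x (Pi.single j 1)
        - (l : ℂ) * DFact j l f x := rfl

lemma DFact_contDiff {f : (Fin n → ℝ) → ℂ} (j : Fin n) (l : ℕ) (hf : ContDiff ℝ (⊤ : ℕ∞) f) :
    ContDiff ℝ (⊤ : ℕ∞) (DFact j l f) := by
  induction l with
  | zero => exact hf
  | succ l ih =>
    rw [DFact_succ]
    exact (contDiff_const.mul ((ih.fderiv_right (by simp)).clm_apply contDiff_const)).sub
      (contDiff_const.mul ih)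

lemma DFact_add {f g : (Fin n → ℝ) → ℂ} (j : Fin n) (l : ℕ)
    (hf : ContDiff ℝ (⊤ : ℕ∞) f) (hg : ContDiff ℝ (⊤ : ℕ∞) g) :
    DFact j l (fun x => f x + g x) = fun x => DFact j l f x + DFact j l g x := by
  induction l with
  | zero => rfl
  | succ l ih =>
    simp only [DFact_succ]
    funext x
    rw [ih]
    rw [fderiv_fun_add ((DFact_contDiff j l hf).differentiable (by simp) x)
      ((DFact_contDiff j l hg).differentiable (by simp) x)]
    rw [ContinuousLinearMap.add_apply]
    ring

lemma DFact_smul {f : (Fin n → ℝ) → ℂ} (c : ℂ) (j : Fin n) (l : ℕ)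
    (hf : ContDiff ℝ (⊤ : ℕ∞) f) :
    DFact j l (fun x => c * f x) = fun x => c * DFact j l f x := by
  induction l with
  | zero => rfl
  | succ l ih =>
    simp only [DFact_succ]
    funext x
    rw [ih]
    have h1 : fderiv ℝ (fun x => c * DFact j l f x) x = c • fderiv ℝ (DFact j l f) x := by
      have := fderiv_fun_const_smul (𝕜 := ℝ)
        ((DFact_contDiff j l hf).differentiable (by simp) x) c
      simpa [smul_eq_mul] using this
    rw [h1, ContinuousLinearMap.smul_apply, smul_eq_mul]
    ring

lemma DFact_zero (j : Fin n) (l : ℕ) :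
    DFact j l (fun _ => (0 : ℂ)) = fun _ => (0 : ℂ) := by
  have h := DFact_smul (f := fun _ => (0 : ℂ)) 0 j l contDiff_const
  simpa using h

lemma foldr_contDiff {f : (Fin n → ℝ) → ℂ} (be : Fin n → ℕ) (l : List (Fin n))
    (hf : ContDiff ℝ (⊤ : ℕ∞) f) :
    ContDiff ℝ (⊤ : ℕ∞) (l.foldr (fun j g => DFact j (be j) g) f) := by
  induction l with
  | nil => exact hf
  | cons j l ih => exact DFact_contDiff j (be j) ih

lemma DFactM_contDiff {f : (Fin n → ℝ) → ℂ} (be : Fin n → ℕ) (hf : ContDiff ℝ (⊤ : ℕ∞) f) :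
    ContDiff ℝ (⊤ : ℕ∞) (DFactM be f) :=
  foldr_contDiff be _ hf

lemma foldr_add {f g : (Fin n → ℝ) → ℂ} (be : Fin n → ℕ) (l : List (Fin n))
    (hf : ContDiff ℝ (⊤ : ℕ∞) f) (hg : ContDiff ℝ (⊤ : ℕ∞) g) :
    l.foldr (fun j h => DFact j (be j) h) (fun x => f x + g x)
      = fun x => l.foldr (fun j h => DFact j (be j) h) f x
        + l.foldr (fun j h => DFact j (be j) h) g x := by
  induction l with
  | nil => rfl
  | cons j l ih =>
    show DFact j (be j) _ = _
    rw [ih]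
    exact DFact_add j (be j) (foldr_contDiff be l hf) (foldr_contDiff be l hg)

lemma DFactM_add {f g : (Fin n → ℝ) → ℂ} (be : Fin n → ℕ)
    (hf : ContDiff ℝ (⊤ : ℕ∞) f) (hg : ContDiff ℝ (⊤ : ℕ∞) g) :
    DFactM be (fun x => f x + g x) = fun x => DFactM be f x + DFactM be g x :=
  foldr_add be _ hf hg

lemma foldr_smul {f : (Fin n → ℝ) → ℂ} (c : ℂ) (be : Fin n → ℕ) (l : List (Fin n))
    (hf : ContDiff ℝ (⊤ : ℕ∞) f) :
    l.foldr (fun j h => DFact j (be j) h) (fun x => c * f x)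
      = fun x => c * l.foldr (fun j h => DFact j (be j) h) f x := by
  induction l with
  | nil => rfl
  | cons j l ih =>
    show DFact j (be j) _ = _
    rw [ih]
    exact DFact_smul c j (be j) (foldr_contDiff be l hf)

lemma DFactM_smul {f : (Fin n → ℝ) → ℂ} (c : ℂ) (be : Fin n → ℕ) (hf : ContDiff ℝ (⊤ : ℕ∞) f) :
    DFactM be (fun x => c * f x) = fun x => c * DFactM be f x :=
  foldr_smul c be _ hf

lemma DFactM_zero (be : Fin n → ℕ) :
    DFactM be (fun _ => (0 : ℂ)) = fun _ => (0 : ℂ) := by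
  have h := DFactM_smul (f := fun _ => (0 : ℂ)) 0 be contDiff_const
  simpa using h





/-- lattice point as element of Euclidean space -/
def ev {n : ℕ} (k : Fin n → ℤ) : EuclideanSpace ℝ (Fin n) := WithLp.toLp 2 (fun i => (k i : ℝ))

lemma knorm_eq (k : Fin n → ℤ) : knorm k = ‖ev k‖ := by
  rw [EuclideanSpace.norm_eq]
  unfold knorm ev
  congr 1
  apply Finset.sum_congr rfl
  intro i _
  show ((k i : ℝ)) ^ 2 = ‖((k i : ℝ))‖ ^ 2
  rw [Real.norm_eq_abs, sq_abs]

lemma knorm_nonneg (k : Fin n → ℤ) : 0 ≤ knorm k := Real.sqrt_nonneg _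

lemma ev_add (k l : Fin n → ℤ) : ev (k + l) = ev k + ev l := by
  ext i; simp [ev]

lemma knorm_shiftZ_le (γ : Fin n → ℕ) : knorm (shiftZ γ) ≤ ∑ i, (γ i : ℝ) := by
  rw [knorm_eq, EuclideanSpace.norm_eq]
  have h1 : ∑ i, ‖ev (shiftZ γ) i‖ ^ 2 ≤ (∑ i, (γ i : ℝ)) ^ 2 := by
    have := Finset.sum_sq_le_sq_sum_of_nonneg (s := Finset.univ)
      (f := fun i => (γ i : ℝ)) (fun i _ => by positivity)
    refine le_trans (le_of_eq ?_) this
    apply Finset.sum_congr rfl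
    intro i _
    simp [ev, shiftZ]
  refine le_trans (Real.sqrt_le_sqrt h1) ?_
  rw [Real.sqrt_sq (by positivity)]

lemma knorm_add_le (k : Fin n → ℤ) (γ : Fin n → ℕ) :
    knorm (k + shiftZ γ) ≤ knorm k + ∑ i, (γ i : ℝ) := by
  rw [knorm_eq, ev_add]
  refine le_trans (norm_add_le _ _) ?_
  rw [← knorm_eq]
  have := knorm_shiftZ_le γ
  rw [knorm_eq] at this
  exact add_le_add le_rfl this

lemma knorm_le_add (k : Fin n → ℤ) (γ : Fin n → ℕ) :
    knorm k ≤ knorm (k + shiftZ γ) + ∑ i, (γ i : ℝ) := by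
  have h : ev k = ev (k + shiftZ γ) - ev (shiftZ γ) := by
    rw [ev_add]; abel
  rw [knorm_eq, h]
  refine le_trans (norm_sub_le _ _) ?_
  rw [← knorm_eq, ← knorm_eq]
  exact add_le_add le_rfl (knorm_shiftZ_le γ)

/- list sum helpers -/

lemma pi_list_sum_apply {α X 𝕜 : Type*} [AddCommMonoid 𝕜] (L : List α) (F : α → (X → 𝕜)) (x : X) :
    (L.map F).sum x = (L.map fun p => F p x).sum := by
  induction L with
  | nil => rfl
  | cons a l ih => simp [ih]

lemma contDiff_list_sum {α : Type*} (L : List α) (G : α → (Fin n → ℝ) → ℂ)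
    (h : ∀ q ∈ L, ContDiff ℝ (⊤ : ℕ∞) (G q)) :
    ContDiff ℝ (⊤ : ℕ∞) (fun x => (L.map fun q => G q x).sum) := by
  induction L with
  | nil => simp only [List.map_nil, List.sum_nil]; exact contDiff_const (c := (0 : ℂ))
  | cons a l ih =>
    simp only [List.map_cons, List.sum_cons]
    exact (h a (by simp)).add (ih fun q hq => h q (by simp [hq]))

lemma list_sum_abs_le {α : Type*} (L : List α) (F : α → ℂ) (G : α → ℝ)
    (h : ∀ p ∈ L, ‖F p‖ ≤ G p) :
    ‖(L.map F).sum‖ ≤ (L.map G).sum := by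
  induction L with
  | nil => simp
  | cons a l ih =>
    simp only [List.map_cons, List.sum_cons]
    refine le_trans (norm_add_le _ _) ?_
    exact add_le_add (h a (by simp)) (ih fun p hp => h p (by simp [hp]))

lemma list_sum_le {α : Type*} (L : List α) (F G : α → ℝ) (h : ∀ p ∈ L, F p ≤ G p) :
    (L.map F).sum ≤ (L.map G).sum := by
  induction L with
  | nil => simp
  | cons a l ih =>
    simp only [List.map_cons, List.sum_cons]
    exact add_le_add (h a (by simp)) (ih fun p hp => h p (by simp [hp]))

lemma list_sum_mul_right {α : Type*} (L : List α) (F : α → ℝ) (c : ℝ) :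
    (L.map fun p => F p * c).sum = (L.map F).sum * c := by
  induction L with
  | nil => simp
  | cons a l ih => simp [ih, add_mul]

lemma list_finset_swap {α β M : Type*} [AddCommMonoid M] (L : List α) (s : Finset β)
    (F : α → β → M) :
    (L.map fun p => ∑ j ∈ s, F p j).sum = ∑ j ∈ s, (L.map fun p => F p j).sum := by
  induction L with
  | nil => simp
  | cons a l ih => simp [ih, Finset.sum_add_distrib]

/- derived kdiffM lemmas -/

lemma kdiffM_zeroIdx {M : Type*} [AddCommGroup M] (f : (Fin n → ℤ) → M) :
    kdiffM (fun _ => 0) f = f := by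
  show (List.finRange n).foldr _ f = f
  induction (List.finRange n) with
  | nil => rfl
  | cons j l ih => show (kdiff j)^[0] _ = f; simpa using ih

lemma kdiffM_pointwise (al : Fin n → ℕ) (L : List (ℤ × (Fin n → ℕ)))
    (hL : ∀ (f : (Fin n → ℤ) → ((Fin n → ℝ) → ℂ)) (k), kdiffM al f k
        = (L.map (fun p => p.1 • f (k + shiftZ p.2))).sum)
    (g : (Fin n → ℤ) → ((Fin n → ℝ) → ℂ)) (k : Fin n → ℤ) :
    kdiffM al g k = fun x => (L.map fun p => (p.1 : ℂ) * g (k + shiftZ p.2) x).sum := by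
  rw [hL]
  funext x
  rw [pi_list_sum_apply]
  congr 1
  apply List.map_congr_left
  intro p _
  show (p.1 • g (k + shiftZ p.2)) x = _
  rw [Pi.smul_apply, zsmul_eq_mul]

lemma kdiffM_contDiff (al : Fin n → ℕ) (g : (Fin n → ℤ) → ((Fin n → ℝ) → ℂ))
    (hg : ∀ k, ContDiff ℝ (⊤ : ℕ∞) (g k)) (k : Fin n → ℤ) :
    ContDiff ℝ (⊤ : ℕ∞) (kdiffM al g k) := by
  obtain ⟨L, _, hL⟩ := kdiffM_rep (M := (Fin n → ℝ) → ℂ) al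
  rw [kdiffM_pointwise al L hL g k]
  exact contDiff_list_sum L _ fun q _ => contDiff_const.mul (hg _)

lemma DFactM_kdiffM (al be : Fin n → ℕ) (L : List (ℤ × (Fin n → ℕ)))
    (hL : ∀ (f : (Fin n → ℤ) → ((Fin n → ℝ) → ℂ)) (k), kdiffM al f k
        = (L.map (fun p => p.1 • f (k + shiftZ p.2))).sum)
    (g : (Fin n → ℤ) → ((Fin n → ℝ) → ℂ)) (hg : ∀ k, ContDiff ℝ (⊤ : ℕ∞) (g k))
    (k : Fin n → ℤ) (x : Fin n → ℝ) :
    DFactM be (kdiffM al g k) x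
      = (L.map fun p => (p.1 : ℂ) * DFactM be (g (k + shiftZ p.2)) x).sum := by
  rw [kdiffM_pointwise al L hL g k]
  have key : ∀ L' : List (ℤ × (Fin n → ℕ)),
      DFactM be (fun x => (L'.map fun p => (p.1 : ℂ) * g (k + shiftZ p.2) x).sum)
        = fun x => (L'.map fun p => (p.1 : ℂ) * DFactM be (g (k + shiftZ p.2)) x).sum := by
    intro L'
    induction L' with
    | nil => simpa using DFactM_zero be
    | cons a l ih =>
      simp only [List.map_cons, List.sum_cons]
      have h1 : ContDiff ℝ (⊤ : ℕ∞) (fun x => (a.1 : ℂ) * g (k + shiftZ a.2) x) :=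
        contDiff_const.mul (hg _)
      have h2 : ContDiff ℝ (⊤ : ℕ∞) (fun x => (l.map fun p => (p.1 : ℂ) * g (k + shiftZ p.2) x).sum) :=
        contDiff_list_sum l _ fun q _ => contDiff_const.mul (hg _)
      rw [DFactM_add be h1 h2, ih]
      funext x
      congr 1
      have := DFactM_smul (a.1 : ℂ) be (hg (k + shiftZ a.2))
      exact congrFun this x
  rw [key L]

lemma kdiffM_congr (al : Fin n → ℕ)
    (f g : (Fin n → ℤ) → ((Fin n → ℝ) → ℂ)) (k : Fin n → ℤ)
    (h : ∀ γ : Fin n → ℕ, (∀ i, γ i ≤ al i) → f (k + shiftZ γ) = g (k + shiftZ γ)) :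
    kdiffM al f k = kdiffM al g k := by
  obtain ⟨L, hbd, hL⟩ := kdiffM_rep (M := (Fin n → ℝ) → ℂ) al
  rw [hL f k, hL g k]
  congr 1
  apply List.map_congr_left
  intro p hp
  rw [h p.2 (hbd p hp)]

lemma kdiffM_finset_sum {β : Type*} (al : Fin n → ℕ) (s : Finset β)
    (g : β → (Fin n → ℤ) → ((Fin n → ℝ) → ℂ)) (k : Fin n → ℤ) :
    kdiffM al (fun k' => ∑ j ∈ s, g j k') k = ∑ j ∈ s, kdiffM al (g j) k := by
  obtain ⟨L, _, hL⟩ := kdiffM_rep (M := (Fin n → ℝ) → ℂ) al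
  rw [hL]
  have h1 : ∀ p : ℤ × (Fin n → ℕ),
      (p.1 • ∑ j ∈ s, g j (k + shiftZ p.2)) = ∑ j ∈ s, p.1 • g j (k + shiftZ p.2) := by
    intro p; exact Finset.smul_sum
  calc (L.map fun p => p.1 • ∑ j ∈ s, g j (k + shiftZ p.2)).sum
      = (L.map fun p => ∑ j ∈ s, p.1 • g j (k + shiftZ p.2)).sum := by
        congr 1; exact List.map_congr_left fun p _ => h1 p
    _ = ∑ j ∈ s, (L.map fun p => p.1 • g j (k + shiftZ p.2)).sum := list_finset_swap _ _ _
    _ = ∑ j ∈ s, kdiffM al (g j) k := by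
        apply Finset.sum_congr rfl
        intro j _
        rw [hL]

lemma rpow_le_max_one (t V e : ℝ) (h0 : 0 ≤ t) (h1 : t ≤ V) :
    (1 + t) ^ e ≤ max 1 ((1 + V) ^ e) := by
  rcases le_or_gt 0 e with he | he
  · exact le_max_of_le_right (Real.rpow_le_rpow (by linarith) (by linarith) he)
  · exact le_max_of_le_left (Real.rpow_le_one_of_one_le_of_nonpos (by linarith) he.le)

lemma min_le_rpow_one (t V e : ℝ) (h0 : 0 ≤ t) (h1 : t ≤ V) :
    min 1 ((1 + V) ^ e) ≤ (1 + t) ^ e := by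
  rcases le_or_gt 0 e with he | he
  · refine min_le_of_left_le ?_
    calc (1 : ℝ) = 1 ^ e := (Real.one_rpow e).symm
    _ ≤ (1 + t) ^ e := Real.rpow_le_rpow (by norm_num) (by linarith) he
  · exact min_le_of_right_le (Real.rpow_le_rpow_of_nonpos (by linarith) (by linarith) he.le)

lemma list_sum_add' {α M : Type*} [AddCommMonoid M] (L : List α) (F G : α → M) :
    (L.map fun p => F p + G p).sum = (L.map F).sum + (L.map G).sum := by
  induction L with
  | nil => simp
  | cons a l ih => simp only [List.map_cons, List.sum_cons, ih]; abel

lemma kdiffM_add {M : Type*} [AddCommGroup M] (al : Fin n → ℕ)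
    (f g : (Fin n → ℤ) → M) (k : Fin n → ℤ) :
    kdiffM al (fun k' => f k' + g k') k = kdiffM al f k + kdiffM al g k := by
  obtain ⟨L, _, hL⟩ := rep_exists (M := M) al (List.finRange n)
  rw [show kdiffM al (fun k' => f k' + g k') k = _ from hL _ k,
    show kdiffM al f k = _ from hL _ k, show kdiffM al g k = _ from hL _ k]
  rw [← list_sum_add']
  congr 1
  apply List.map_congr_left
  intro p _
  exact smul_add _ _ _

lemma DFactM_finset_sum {β : Type*} (be : Fin n → ℕ) (s : Finset β)
    (g : β → (Fin n → ℝ) → ℂ) (hg : ∀ j ∈ s, ContDiff ℝ (⊤ : ℕ∞) (g j)) :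
    DFactM be (fun x => ∑ j ∈ s, g j x) = fun x => ∑ j ∈ s, DFactM be (g j) x := by
  classical
  induction s using Finset.induction_on with
  | empty => simpa using DFactM_zero be
  | insert c t hnot ih =>
    have h1 : ContDiff ℝ (⊤ : ℕ∞) (g c) := hg c (by simp)
    have h2 : ContDiff ℝ (⊤ : ℕ∞) (fun x => ∑ j ∈ t, g j x) :=
      ContDiff.sum fun j hj => hg j (by simp [hj])
    have : (fun x => ∑ j ∈ insert c t, g j x) = fun x => g c x + ∑ j ∈ t, g j x := by
      funext x; rw [Finset.sum_insert hnot]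
    rw [this, DFactM_add be h1 h2, ih fun j hj => hg j (by simp [hj])]
    funext x
    rw [Finset.sum_insert hnot]


lemma list_sum_nonneg {α : Type*} (L : List α) (F : α → ℝ) (h : ∀ p ∈ L, 0 ≤ F p) :
    0 ≤ (L.map F).sum := by
  induction L with
  | nil => simp
  | cons a l ih =>
    simp only [List.map_cons, List.sum_cons]
    have := h a (by simp)
    have := ih fun p hp => h p (by simp [hp])
    linarith

end AS

set_option maxHeartbeats 2000000 in
/-- Asymptotic summation: given symbols `a_j ∈ S^{m_j}` with `m_j` strictly decreasing to
`-∞`, there is `a ∈ S^{m_0}` with `a - Σ_{j<N} a_j ∈ S^{m_N}` for every `N`. -/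
theorem asymptotic_sum_of_symbols {n : ℕ} (m : ℕ → ℝ)
    (hm : ∀ j, m (j + 1) < m j) (hlim : Filter.Tendsto m Filter.atTop Filter.atBot)
    (a : ℕ → (Fin n → ℤ) → (Fin n → ℝ) → ℂ)
    (ha : ∀ j, SymbolClass n (m j) (a j)) :
    ∃ b : (Fin n → ℤ) → (Fin n → ℝ) → ℂ, SymbolClass n (m 0) b ∧
      ∀ N : ℕ, SymbolClass n (m N)
        (fun k x => b k x - ∑ j ∈ Finset.range N, a j k x) := by
  classical
  have hsm : ∀ j k, ContDiff ℝ (⊤ : ℕ∞) (a j k) := fun j => (ha j).1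
  have hper : ∀ j k x (v : Fin n → ℤ), a j k (x + fun i => (v i : ℝ)) = a j k x :=
    fun j => (ha j).2.1
  choose C hC using fun j => (ha j).2.2
  have hCpos : ∀ j al be, 0 < C j al be := fun j al be => (hC j al be).1
  have hCbd := fun j al be => (hC j al be).2
  have hmono : ∀ {i j : ℕ}, i ≤ j → m j ≤ m i :=
    fun h => (strictAnti_nat_of_succ_lt hm).antitone h
  set Cmax : ℕ → ℝ := fun j =>
    Finset.univ.sup' Finset.univ_nonempty
      (fun p : Fin n → Fin (j+1) => C j (fun _ => 0) (fun i => (p i : ℕ))) with hCmaxdef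
  have hCmax : ∀ (j : ℕ) (be : Fin n → ℕ), (∀ i, be i ≤ j) →
      C j (fun _ => 0) be ≤ Cmax j := by
    intro j be hbe
    have h1 := Finset.le_sup'
      (fun p : Fin n → Fin (j+1) => C j (fun _ => 0) (fun i => (p i : ℕ)))
      (Finset.mem_univ (fun i => (⟨be i, Nat.lt_succ_of_le (hbe i)⟩ : Fin (j+1))))
    exact h1
  have hCmaxpos : ∀ j, 0 < Cmax j :=
    fun j => lt_of_lt_of_le (hCpos j (fun _ => 0) (fun _ => 0))
      (hCmax j (fun _ => 0) (fun _ => Nat.zero_le j))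
  set Dbig : ℕ → ℝ := fun j => (1 + Cmax j) * ((1 : ℝ) + j) ^ (|m j|) with hDbigdef
  have hDbigpos : ∀ j, 0 < Dbig j := by
    intro j
    have h1 := hCmaxpos j
    have h2 : (0:ℝ) < ((1 : ℝ) + j) ^ (|m j|) := Real.rpow_pos_of_pos (by positivity) _
    have : Dbig j = (1 + Cmax j) * ((1 : ℝ) + j) ^ (|m j|) := rfl
    rw [this]
    exact mul_pos (by linarith) h2
  have hρex : ∀ j : ℕ, ∃ ρ : ℝ, 0 ≤ ρ ∧ ∀ t : ℝ, ρ ≤ t →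
      Dbig (j+1) * (1 + t) ^ (m (j+1) - m j) ≤ ((2:ℝ))⁻¹ ^ (j+1) := by
    intro j
    have hδ : m (j+1) - m j < 0 := by linarith [hm j]
    have htend : Tendsto (fun t : ℝ => (1 + t) ^ (m (j+1) - m j)) atTop (𝓝 0) := by
      have h1 : Tendsto (fun t : ℝ => 1 + t) atTop atTop :=
        tendsto_atTop_add_const_left atTop 1 tendsto_id
      have h2 := tendsto_rpow_neg_atTop (y := -(m (j+1) - m j)) (by linarith)
      rw [neg_neg] at h2
      exact h2.comp h1
    have hεpos : 0 < ((2:ℝ))⁻¹ ^ (j+1) / Dbig (j+1) :=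
      div_pos (pow_pos (by norm_num) _) (hDbigpos _)
    obtain ⟨ρ0, hρ0⟩ := Filter.eventually_atTop.1 (htend.eventually (gt_mem_nhds hεpos))
    refine ⟨max ρ0 0, le_max_right _ _, ?_⟩
    intro t ht
    have h3 := hρ0 t (le_trans (le_max_left _ _) ht)
    have h4 := hDbigpos (j+1)
    calc Dbig (j+1) * (1 + t) ^ (m (j+1) - m j)
        ≤ Dbig (j+1) * (((2:ℝ))⁻¹ ^ (j+1) / Dbig (j+1)) :=
          mul_le_mul_of_nonneg_left h3.le h4.le
      _ = ((2:ℝ))⁻¹ ^ (j+1) := by field_simp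
  choose ρ hρ0 hρbd using hρex
  set R : ℕ → ℝ := fun j => Nat.casesOn j 0 (fun j' => ((j' : ℝ) + 1) + ρ j') with hRdef
  have hRge : ∀ j : ℕ, (j : ℝ) ≤ R j := by
    intro j
    cases j with
    | zero => simp [hRdef]
    | succ j' =>
      show ((j' + 1 : ℕ) : ℝ) ≤ ((j' : ℝ) + 1) + ρ j'
      push_cast
      linarith [hρ0 j']
  have hR0 : ∀ j : ℕ, (0:ℝ) ≤ R j := fun j => le_trans (by positivity) (hRge j)
  have hRsmall : ∀ (j : ℕ) (t : ℝ), R (j+1) - ((j:ℝ)+1) ≤ t →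
      Dbig (j+1) * (1 + t) ^ (m (j+1) - m j) ≤ ((2:ℝ))⁻¹ ^ (j+1) := by
    intro j t ht
    apply hρbd j t
    have h1 : R (j+1) = ((j : ℝ) + 1) + ρ j := rfl
    rw [h1] at ht
    linarith
  set χ : ℕ → (Fin n → ℤ) → ℂ := fun j k => if R j ≤ knorm k then 1 else 0 with hχdef
  set b : (Fin n → ℤ) → (Fin n → ℝ) → ℂ :=
    fun k x => ∑ j ∈ Finset.range (⌈knorm k⌉₊ + 1), χ j k * a j k x with hbdef
  have hχvan : ∀ (j : ℕ) (k), knorm k < (j:ℝ) → χ j k = 0 := by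
    intro j k h
    show (if R j ≤ knorm k then (1:ℂ) else 0) = 0
    exact if_neg (by push_neg; exact lt_of_lt_of_le h (hRge j))
  have hstab : ∀ (k) (M : ℕ), knorm k < (M:ℝ) →
      b k = fun x => ∑ j ∈ Finset.range M, χ j k * a j k x := by
    intro k M hM
    funext x
    have key : ∀ r : ℕ, knorm k < (r:ℝ) → r ≤ max (⌈knorm k⌉₊ + 1) M →
        ∑ j ∈ Finset.range r, χ j k * a j k x
          = ∑ j ∈ Finset.range (max (⌈knorm k⌉₊ + 1) M), χ j k * a j k x := by
      intro r hr hrM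
      apply Finset.sum_subset (Finset.range_subset_range.2 hrM)
      intro j _ hjr
      have hrj : r ≤ j := le_of_not_gt fun hh => hjr (Finset.mem_range.2 hh)
      have : knorm k < (j : ℝ) := lt_of_lt_of_le hr (by exact_mod_cast hrj)
      rw [hχvan j k this, zero_mul]
    have h1 : knorm k < ((⌈knorm k⌉₊ + 1 : ℕ) : ℝ) := by
      push_cast
      linarith [Nat.le_ceil (knorm k)]
    show ∑ j ∈ Finset.range (⌈knorm k⌉₊ + 1), χ j k * a j k x
      = ∑ j ∈ Finset.range M, χ j k * a j k x
    rw [key _ h1 (le_max_left _ _), key M hM (le_max_right _ _)]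
  have hbsmooth : ∀ k, ContDiff ℝ (⊤ : ℕ∞) (b k) := by
    intro k
    show ContDiff ℝ (⊤ : ℕ∞) fun x => ∑ j ∈ Finset.range (⌈knorm k⌉₊ + 1), χ j k * a j k x
    exact ContDiff.sum fun j _ => contDiff_const.mul (hsm j k)
  have main : ∀ N : ℕ, SymbolClass n (m N)
      (fun k x => b k x - ∑ j ∈ Finset.range N, a j k x) := by
    intro N
    refine ⟨?_, ?_, ?_⟩
    · intro k
      exact (hbsmooth k).sub (ContDiff.sum fun j _ => hsm j k)
    · intro k x v
      show b k (x + fun i => ((v i : ℝ))) - _ = _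
      have h1 : b k (x + fun i => ((v i : ℝ))) = b k x := by
        show (∑ j ∈ Finset.range (⌈knorm k⌉₊ + 1), χ j k * a j k (x + fun i => ((v i : ℝ))))
          = ∑ j ∈ Finset.range (⌈knorm k⌉₊ + 1), χ j k * a j k x
        exact Finset.sum_congr rfl fun j _ => by rw [hper j k x v]
      rw [h1]
      congr 1
      exact Finset.sum_congr rfl fun j _ => hper j k x v
    · intro al be
      set A := ∑ i, ((al i : ℝ)) with hA
      have hA0 : 0 ≤ A := by rw [hA]; positivity
      set AN := ∑ i, al i with hAN
      set BN := ∑ i, be i with hBN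
      have hAcast : A = (AN : ℝ) := by rw [hA, hAN]; push_cast; rfl
      obtain ⟨j1, hj1⟩ := Filter.eventually_atTop.1
        (hlim.eventually (Filter.eventually_le_atBot (min (m N - A) (-1))))
      set j0 := max (max (N+1) j1) (max AN BN) with hj0def
      have hj0N : N + 1 ≤ j0 := le_trans (le_max_left _ _) (le_max_left _ _)
      have hj0A : AN ≤ j0 := le_trans (le_max_left _ _) (le_max_right _ _)
      have hj0B : BN ≤ j0 := le_trans (le_max_right _ _) (le_max_right _ _)
      have hj0m : ∀ j, j0 ≤ j → m j ≤ m N - A ∧ m j ≤ -1 := by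
        intro j hj
        have h1 := hj1 j (le_trans (le_trans (le_max_right _ _) (le_max_left _ _)) hj)
        exact ⟨le_trans h1 (min_le_left _ _), le_trans h1 (min_le_right _ _)⟩
      have hbei : ∀ i, be i ≤ BN := by
        intro i
        rw [hBN]
        exact Finset.single_le_sum (fun _ _ => Nat.zero_le _) (Finset.mem_univ i)
      obtain ⟨L, hbd, hL⟩ := AS.kdiffM_rep (n := n) (M := (Fin n → ℝ) → ℂ) al
      have hLsum0 : 0 ≤ (L.map fun p => |((p.1 : ℝ))|).sum :=
        AS.list_sum_nonneg _ _ fun p _ => abs_nonneg _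
      set Lsum := (L.map fun p => |((p.1 : ℝ))|).sum with hLsumdef
      have hshiftA : ∀ p ∈ L, ∑ i, ((p.2 i : ℝ)) ≤ A := by
        intro p hp
        rw [hA]
        exact Finset.sum_le_sum fun i _ => by exact_mod_cast hbd p hp i
      have hup : ∀ p ∈ L, ∀ k, knorm (k + AS.shiftZ p.2) ≤ knorm k + A :=
        fun p hp k => le_trans (AS.knorm_add_le k p.2) (by linarith [hshiftA p hp])
      have hdown : ∀ p ∈ L, ∀ k, knorm k ≤ knorm (k + AS.shiftZ p.2) + A :=
        fun p hp k => le_trans (AS.knorm_le_add k p.2) (by linarith [hshiftA p hp])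
      have hWpos : ∀ k : Fin n → ℤ, (0:ℝ) < (1 + knorm k) ^ (m N - A) :=
        fun k => Real.rpow_pos_of_pos (by linarith [AS.knorm_nonneg k]) _
      have habsz : ∀ z : ℤ, ‖(z : ℂ)‖ = |((z:ℝ))| := by
        intro z
        exact_mod_cast Complex.norm_intCast z
      have hDa : ∀ (j : ℕ) (k' : Fin n → ℤ) (x : Fin n → ℝ),
          ‖DFactM be (a j k') x‖ ≤ C j (fun _ => 0) be * (1 + knorm k') ^ (m j) := by
        intro j k' x
        have h1 := hCbd j (fun _ => 0) be k' x
        rw [AS.kdiffM_zeroIdx] at h1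
        simpa using h1
      set df : ℕ → (Fin n → ℤ) → (Fin n → ℝ) → ℂ :=
        fun j k x => (χ j k - 1) * a j k x with hdfdef
      have hdfsm : ∀ j k, ContDiff ℝ (⊤ : ℕ∞) (df j k) := by
        intro j k
        show ContDiff ℝ (⊤ : ℕ∞) fun x => (χ j k - 1) * a j k x
        exact contDiff_const.mul (hsm j k)
      have hdfD : ∀ (j : ℕ) (k' : Fin n → ℤ) (x : Fin n → ℝ),
          DFactM be (df j k') x = (χ j k' - 1) * DFactM be (a j k') x :=
        fun j k' x => congrFun (AS.DFactM_smul (χ j k' - 1) be (hsm j k')) x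
      have hB1 : ∀ j : ℕ, ∃ Cb, 0 < Cb ∧ ∀ k x,
          ‖DFactM be (kdiffM al (df j) k) x‖ ≤ Cb * (1 + knorm k) ^ (m N - A) := by
        intro j
        set V1 := max 1 ((1 + (R j + 2*A)) ^ (m j)) with hV1def
        have hV10 : (0:ℝ) ≤ V1 := le_trans zero_le_one (le_max_left _ _)
        set c0 := min 1 ((1 + (R j + A)) ^ (m N - A)) with hc0def
        have hc0pos : 0 < c0 := by
          apply lt_min one_pos
          apply Real.rpow_pos_of_pos
          have h1 := hR0 j
          linarith
        have hD0 : 0 ≤ Lsum * C j (fun _ => 0) be * V1 / c0 :=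
          div_nonneg (mul_nonneg (mul_nonneg hLsum0 (hCpos _ _ _).le) hV10) hc0pos.le
        refine ⟨Lsum * C j (fun _ => 0) be * V1 / c0 + 1, by linarith, ?_⟩
        intro k x
        rw [AS.DFactM_kdiffM al be L hL (df j) (hdfsm j) k x]
        have hWk := hWpos k
        by_cases hreg : R j + A ≤ knorm k
        · have hz : (L.map fun p => ((p.1:ℂ)) * DFactM be (df j (k + AS.shiftZ p.2)) x).sum = 0 := by
            apply List.sum_eq_zero
            intro y hy
            obtain ⟨p, hp, rfl⟩ := List.mem_map.1 hy
            have h1 : R j ≤ knorm (k + AS.shiftZ p.2) := by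
              have := hdown p hp k
              linarith
            have h2 : χ j (k + AS.shiftZ p.2) = 1 := by
              show (if R j ≤ knorm (k + AS.shiftZ p.2) then (1:ℂ) else 0) = 1
              exact if_pos h1
            rw [hdfD, h2, sub_self, zero_mul, mul_zero]
          rw [hz]
          simp only [norm_zero]
          exact mul_nonneg (by linarith) hWk.le
        · push_neg at hreg
          have hterm : ∀ p ∈ L,
              ‖((p.1:ℂ)) * DFactM be (df j (k + AS.shiftZ p.2)) x‖
                ≤ |((p.1:ℝ))| * (C j (fun _ => 0) be * V1) := by
            intro p hp
            rw [norm_mul, habsz]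
            apply mul_le_mul_of_nonneg_left _ (abs_nonneg _)
            rw [hdfD, norm_mul]
            have hχ1 : ‖χ j (k + AS.shiftZ p.2) - 1‖ ≤ 1 := by
              show ‖(if R j ≤ knorm (k + AS.shiftZ p.2) then (1:ℂ) else 0) - 1‖ ≤ 1
              split
              · simp
              · simp
            have h5 : ‖DFactM be (a j (k + AS.shiftZ p.2)) x‖
                ≤ C j (fun _ => 0) be * V1 := by
              refine le_trans (hDa j _ x) ?_
              apply mul_le_mul_of_nonneg_left _ (hCpos _ _ _).le
              have h6 : knorm (k + AS.shiftZ p.2) ≤ R j + 2*A := by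
                have := hup p hp k
                linarith
              exact le_trans
                (AS.rpow_le_max_one _ (R j + 2*A) _ (AS.knorm_nonneg _) h6) (le_of_eq hV1def.symm)
            calc ‖χ j (k + AS.shiftZ p.2) - 1‖
                  * ‖DFactM be (a j (k + AS.shiftZ p.2)) x‖
                ≤ 1 * (C j (fun _ => 0) be * V1) :=
                  mul_le_mul hχ1 h5 (norm_nonneg _) zero_le_one
              _ = C j (fun _ => 0) be * V1 := one_mul _
          refine le_trans (AS.list_sum_abs_le L _ _ hterm) ?_
          rw [AS.list_sum_mul_right, ← hLsumdef]
          have hWlow : c0 ≤ (1 + knorm k) ^ (m N - A) := by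
            rw [hc0def]
            exact AS.min_le_rpow_one _ (R j + A) _ (AS.knorm_nonneg k) hreg.le
          have key : Lsum * (C j (fun _ => 0) be * V1)
              ≤ (Lsum * C j (fun _ => 0) be * V1 / c0) * c0 := by
            rw [div_mul_cancel₀ _ hc0pos.ne']
            apply le_of_eq
            ring
          calc Lsum * (C j (fun _ => 0) be * V1)
              ≤ (Lsum * C j (fun _ => 0) be * V1 / c0) * c0 := key
            _ ≤ (Lsum * C j (fun _ => 0) be * V1 / c0) * ((1 + knorm k) ^ (m N - A)) :=
                mul_le_mul_of_nonneg_left hWlow hD0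
            _ ≤ _ := by nlinarith [hWk]
      have hB2 : ∀ j : ℕ, N ≤ j → ∀ k x,
          ‖DFactM be (kdiffM al (a j) k) x‖
            ≤ C j al be * (1 + knorm k) ^ (m N - A) := by
        intro j hj k x
        have h1 := hCbd j al be k x
        rw [← hA] at h1
        refine le_trans h1 ?_
        apply mul_le_mul_of_nonneg_left _ (hCpos _ _ _).le
        apply Real.rpow_le_rpow_of_exponent_le (by linarith [AS.knorm_nonneg k])
        have := hmono hj
        linarith
      set σf : ℕ → (Fin n → ℤ) → (Fin n → ℝ) → ℂ :=
        fun j k x => (χ j k - if j < N then (1:ℂ) else 0) * a j k x with hσfdef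
      have hσsm : ∀ j k, ContDiff ℝ (⊤ : ℕ∞) (σf j k) := by
        intro j k
        show ContDiff ℝ (⊤ : ℕ∞) fun x => (χ j k - if j < N then (1:ℂ) else 0) * a j k x
        exact contDiff_const.mul (hsm j k)
      have hmid : ∀ j : ℕ, ∃ Cm, 0 < Cm ∧ ∀ k x,
          ‖DFactM be (kdiffM al (σf j) k) x‖ ≤ Cm * (1 + knorm k) ^ (m N - A) := by
        intro j
        obtain ⟨Cb, hCbpos, hCb⟩ := hB1 j
        rcases lt_or_ge j N with hjN | hjN
        · refine ⟨Cb, hCbpos, ?_⟩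
          intro k x
          have heq : σf j = df j := by
            funext k' x'
            show (χ j k' - if j < N then (1:ℂ) else 0) * a j k' x' = (χ j k' - 1) * a j k' x'
            rw [if_pos hjN]
          rw [heq]
          exact hCb k x
        · refine ⟨Cb + C j al be, by have := hCpos j al be; linarith, ?_⟩
          intro k x
          have hsplit : σf j = fun k' => df j k' + a j k' := by
            funext k' x'
            show (χ j k' - if j < N then (1:ℂ) else 0) * a j k' x'
              = ((χ j k' - 1) * a j k' x') + a j k' x'
            rw [if_neg (not_lt.2 hjN)]
            ring
          rw [hsplit, AS.kdiffM_add al (df j) (a j) k]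
          have hk1 : ContDiff ℝ (⊤ : ℕ∞) (kdiffM al (df j) k) :=
            AS.kdiffM_contDiff al (df j) (hdfsm j) k
          have hk2 : ContDiff ℝ (⊤ : ℕ∞) (kdiffM al (a j) k) :=
            AS.kdiffM_contDiff al (a j) (hsm j) k
          rw [show kdiffM al (df j) k + kdiffM al (a j) k
              = (fun x => kdiffM al (df j) k x + kdiffM al (a j) k x) from rfl,
            AS.DFactM_add be hk1 hk2]
          refine le_trans (norm_add_le _ _) ?_
          rw [add_mul]
          exact add_le_add (hCb k x) (hB2 j hjN k x)
      choose Cm hCmpos hCm using hmid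
      set tf : (Fin n → ℤ) → (Fin n → ℝ) → ℂ :=
        fun k x => b k x - ∑ j ∈ Finset.range j0, χ j k * a j k x with htfdef
      have htfsm : ∀ k, ContDiff ℝ (⊤ : ℕ∞) (tf k) := by
        intro k
        show ContDiff ℝ (⊤ : ℕ∞) fun x => b k x - ∑ j ∈ Finset.range j0, χ j k * a j k x
        exact (hbsmooth k).sub (ContDiff.sum fun j _ => contDiff_const.mul (hsm j k))
      set E0 := Cmax j0 * (1 + A) ^ (-(m j0)) with hE0def
      have hE00 : 0 ≤ E0 := by
        rw [hE0def]
        exact mul_nonneg (hCmaxpos j0).le (Real.rpow_nonneg (by linarith) _)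
      have htail : ∀ k x, ‖DFactM be (kdiffM al tf k) x‖
          ≤ (Lsum * (E0 + 2)) * (1 + knorm k) ^ (m N - A) := by
        intro k x
        set Mt := max j0 (⌈knorm k + A⌉₊ + 1) with hMtdef
        have hMtb : ∀ γ : Fin n → ℕ, (∀ i, γ i ≤ al i) → knorm (k + AS.shiftZ γ) < (Mt:ℝ) := by
          intro γ hγ
          have h1 : ∑ i, ((γ i:ℝ)) ≤ A := by
            rw [hA]
            exact Finset.sum_le_sum fun i _ => by exact_mod_cast hγ i
          have h2 : knorm (k + AS.shiftZ γ) ≤ knorm k + A :=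
            le_trans (AS.knorm_add_le k γ) (by linarith)
          have h3 : knorm k + A ≤ ((⌈knorm k + A⌉₊ : ℕ):ℝ) := Nat.le_ceil _
          have h4 : ((⌈knorm k + A⌉₊ + 1 : ℕ):ℝ) ≤ (Mt:ℝ) := by
            exact_mod_cast le_max_right j0 _
          push_cast at h3 h4 ⊢
          linarith
        have hj0Mt : j0 ≤ Mt := le_max_left _ _
        set gχ : ℕ → (Fin n → ℤ) → (Fin n → ℝ) → ℂ := fun j k' x => χ j k' * a j k' x with hgdef
        have hgsm : ∀ j k', ContDiff ℝ (⊤ : ℕ∞) (gχ j k') := by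
          intro j k'
          show ContDiff ℝ (⊤ : ℕ∞) fun x => χ j k' * a j k' x
          exact contDiff_const.mul (hsm j k')
        have hgD : ∀ j k' x, DFactM be (gχ j k') x = χ j k' * DFactM be (a j k') x :=
          fun j k' x => congrFun (AS.DFactM_smul (χ j k') be (hsm j k')) x
        have hcong : kdiffM al tf k
            = kdiffM al (fun k' => ∑ j ∈ Finset.Ico j0 Mt, gχ j k') k := by
          apply AS.kdiffM_congr
          intro γ hγ
          have hst := hstab (k + AS.shiftZ γ) Mt (hMtb γ hγ)
          funext x'
          show b (k + AS.shiftZ γ) x'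
              - ∑ j ∈ Finset.range j0, χ j (k + AS.shiftZ γ) * a j (k + AS.shiftZ γ) x' = _
          calc b (k + AS.shiftZ γ) x'
              - ∑ j ∈ Finset.range j0, χ j (k + AS.shiftZ γ) * a j (k + AS.shiftZ γ) x'
              = ∑ j ∈ Finset.range Mt, χ j (k + AS.shiftZ γ) * a j (k + AS.shiftZ γ) x'
                - ∑ j ∈ Finset.range j0, χ j (k + AS.shiftZ γ) * a j (k + AS.shiftZ γ) x' := by
                rw [congrFun hst x']
            _ = ∑ j ∈ Finset.Ico j0 Mt, χ j (k + AS.shiftZ γ) * a j (k + AS.shiftZ γ) x' :=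
                (Finset.sum_Ico_eq_sub _ hj0Mt).symm
            _ = (∑ j ∈ Finset.Ico j0 Mt, gχ j (k + AS.shiftZ γ)) x' := by
                rw [Finset.sum_apply]
        rw [hcong, AS.kdiffM_finset_sum al (Finset.Ico j0 Mt) gχ k]
        have hkc : ∀ j ∈ Finset.Ico j0 Mt, ContDiff ℝ (⊤ : ℕ∞) (kdiffM al (gχ j) k) :=
          fun j _ => AS.kdiffM_contDiff al (gχ j) (hgsm j) k
        have e3 : (∑ j ∈ Finset.Ico j0 Mt, kdiffM al (gχ j) k)
            = fun x' => ∑ j ∈ Finset.Ico j0 Mt, kdiffM al (gχ j) k x' := by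
          funext x'
          rw [Finset.sum_apply]
        rw [e3, AS.DFactM_finset_sum be _ _ hkc]
        refine le_trans (norm_sum_le _ _) ?_
        have hperj : ∀ j ∈ Finset.Ico j0 Mt,
            ‖DFactM be (kdiffM al (gχ j) k) x‖
              ≤ (Lsum * ((if j = j0 then E0 else 0) + ((2:ℝ))⁻¹ ^ j))
                  * (1 + knorm k) ^ (m N - A) := by
          intro j hj
          obtain ⟨hjlo, _⟩ := Finset.mem_Ico.1 hj
          have hmj := hj0m j hjlo
          rw [AS.DFactM_kdiffM al be L hL (gχ j) (hgsm j) k x]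
          have hite0 : (0:ℝ) ≤ (if j = j0 then E0 else 0) := by
            split
            · exact hE00
            · exact le_refl 0
          have hBnd0 : 0 ≤ ((if j = j0 then E0 else 0) + ((2:ℝ))⁻¹ ^ j) := by
            have := pow_nonneg (by norm_num : (0:ℝ) ≤ 2⁻¹) j
            linarith
          have hterm : ∀ p ∈ L,
              ‖((p.1:ℂ)) * DFactM be (gχ j (k + AS.shiftZ p.2)) x‖
                ≤ |((p.1:ℝ))| * (((if j = j0 then E0 else 0) + ((2:ℝ))⁻¹ ^ j)
                    * (1 + knorm k) ^ (m N - A)) := by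
            intro p hp
            rw [norm_mul, habsz]
            apply mul_le_mul_of_nonneg_left _ (abs_nonneg _)
            rw [hgD, norm_mul]
            by_cases hcc : R j ≤ knorm (k + AS.shiftZ p.2)
            · have h2 : χ j (k + AS.shiftZ p.2) = 1 := by
                show (if R j ≤ knorm (k + AS.shiftZ p.2) then (1:ℂ) else 0) = 1
                exact if_pos hcc
              rw [h2]
              simp only [norm_one, one_mul]
              have hCle : C j (fun _ => 0) be ≤ Cmax j :=
                hCmax j be fun i => le_trans (hbei i) (le_trans hj0B hjlo)
              have hposk : (0:ℝ) < 1 + knorm k := by linarith [AS.knorm_nonneg k]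
              have hqt : (1 + knorm k) / (1 + A) ≤ 1 + knorm (k + AS.shiftZ p.2) := by
                rw [div_le_iff₀ (by linarith : (0:ℝ) < 1 + A)]
                have hd := hdown p hp k
                have hkn := AS.knorm_nonneg (k + AS.shiftZ p.2)
                nlinarith
              have h3 : (1 + knorm (k + AS.shiftZ p.2)) ^ (m j)
                  ≤ ((1 + knorm k) / (1 + A)) ^ (m j) :=
                Real.rpow_le_rpow_of_nonpos
                  (div_pos hposk (by linarith)) hqt (by linarith [hmj.2])
              have h4 : ((1 + knorm k) / (1 + A)) ^ (m j)
                  = (1 + A) ^ (-(m j)) * (1 + knorm k) ^ (m j) := by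
                rw [Real.div_rpow hposk.le (by linarith : (0:ℝ) ≤ 1 + A),
                  Real.rpow_neg (by linarith : (0:ℝ) ≤ 1 + A)]
                ring
              have hcore : ‖DFactM be (a j (k + AS.shiftZ p.2)) x‖
                  ≤ Cmax j * ((1 + A) ^ (-(m j)) * (1 + knorm k) ^ (m j)) := by
                refine le_trans (hDa j _ x) ?_
                rw [← h4]
                exact mul_le_mul hCle h3
                  (Real.rpow_nonneg (by linarith [AS.knorm_nonneg (k + AS.shiftZ p.2)]) _)
                  (le_trans (hCpos _ _ _).le hCle)
              rcases eq_or_ne j j0 with rfl | hjj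
              · rw [if_pos rfl]
                refine le_trans hcore ?_
                have h5 : Cmax j0 * ((1 + A) ^ (-(m j0)) * (1 + knorm k) ^ (m j0))
                    = E0 * (1 + knorm k) ^ (m j0) := by
                  rw [hE0def]
                  ring
                rw [h5]
                have h6 : (1 + knorm k) ^ (m j0) ≤ (1 + knorm k) ^ (m N - A) :=
                  Real.rpow_le_rpow_of_exponent_le (by linarith [AS.knorm_nonneg k]) hmj.1
                have h7 := mul_le_mul_of_nonneg_left h6 hE00
                nlinarith [hWpos k, pow_nonneg (by norm_num : (0:ℝ) ≤ 2⁻¹) j0]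
              · rw [if_neg hjj]
                obtain ⟨jj, rfl⟩ : ∃ jj, j = jj + 1 := ⟨j - 1, by omega⟩
                have hjjge : j0 ≤ jj := by omega
                have hmjj := hj0m jj hjjge
                refine le_trans hcore ?_
                have hb1 : 0 ≤ (1 + knorm k) ^ (m (jj+1) - m jj) := Real.rpow_nonneg hposk.le _
                have hb2 : 0 ≤ (1 + knorm k) ^ (m jj) := Real.rpow_nonneg hposk.le _
                have hAj : (1 + A) ≤ (1 + ((jj+1 : ℕ):ℝ)) := by
                  have h8 : (AN:ℝ) ≤ ((jj+1:ℕ):ℝ) := by exact_mod_cast le_trans hj0A hjlo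
                  rw [hAcast]
                  linarith
                have h7 : Cmax (jj+1) * (1 + A) ^ (-(m (jj+1))) ≤ Dbig (jj+1) := by
                  have ha1 : (1 + A) ^ (-(m (jj+1))) ≤ (1 + ((jj+1:ℕ):ℝ)) ^ (|m (jj+1)|) := by
                    rw [abs_of_neg (by linarith [hmj.2] : m (jj+1) < 0)]
                    exact Real.rpow_le_rpow (by linarith) hAj (by linarith [hmj.2])
                  have hd : Dbig (jj+1) = (1 + Cmax (jj+1)) * (1 + ((jj+1:ℕ):ℝ)) ^ (|m (jj+1)|) := by
                    show Dbig (jj+1) = _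
                    rw [hDbigdef]
                  rw [hd]
                  exact mul_le_mul (by linarith [hCmaxpos (jj+1)]) ha1
                    (Real.rpow_nonneg (by linarith) _) (by linarith [hCmaxpos (jj+1)])
                have h9 : Dbig (jj+1) * (1 + knorm k) ^ (m (jj+1) - m jj) ≤ ((2:ℝ))⁻¹ ^ (jj+1) := by
                  apply hRsmall jj (knorm k)
                  have hkk : R (jj+1) - A ≤ knorm k := by
                    have := hup p hp k
                    linarith
                  have hAj' : A ≤ (jj:ℝ) + 1 := by
                    have h8 : (AN:ℝ) ≤ ((jj+1:ℕ):ℝ) := by exact_mod_cast le_trans hj0A hjlo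
                    rw [hAcast]
                    push_cast at h8
                    linarith
                  linarith
                have h10 : (1 + knorm k) ^ (m jj) ≤ (1 + knorm k) ^ (m N - A) :=
                  Real.rpow_le_rpow_of_exponent_le (by linarith [AS.knorm_nonneg k]) hmjj.1
                calc Cmax (jj+1) * ((1 + A) ^ (-(m (jj+1))) * (1 + knorm k) ^ (m (jj+1)))
                    = (Cmax (jj+1) * (1 + A) ^ (-(m (jj+1))))
                        * ((1 + knorm k) ^ (m (jj+1) - m jj) * (1 + knorm k) ^ (m jj)) := by
                      rw [← Real.rpow_add hposk, sub_add_cancel]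
                      ring
                  _ = ((Cmax (jj+1) * (1 + A) ^ (-(m (jj+1))))
                        * (1 + knorm k) ^ (m (jj+1) - m jj)) * (1 + knorm k) ^ (m jj) := by
                      ring
                  _ ≤ (Dbig (jj+1) * (1 + knorm k) ^ (m (jj+1) - m jj)) * (1 + knorm k) ^ (m jj) :=
                      mul_le_mul_of_nonneg_right (mul_le_mul_of_nonneg_right h7 hb1) hb2
                  _ ≤ ((2:ℝ))⁻¹ ^ (jj+1) * (1 + knorm k) ^ (m N - A) :=
                      mul_le_mul h9 h10 hb2 (pow_nonneg (by norm_num) _)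
                  _ = (0 + ((2:ℝ))⁻¹ ^ (jj+1)) * (1 + knorm k) ^ (m N - A) := by
                      ring
            · have h2 : χ j (k + AS.shiftZ p.2) = 0 := by
                show (if R j ≤ knorm (k + AS.shiftZ p.2) then (1:ℂ) else 0) = 0
                exact if_neg hcc
              rw [h2]
              simp only [norm_zero, zero_mul]
              exact mul_nonneg hBnd0 (hWpos k).le
          refine le_trans (AS.list_sum_abs_le L _ _ hterm) ?_
          rw [AS.list_sum_mul_right, ← hLsumdef]
          apply le_of_eq
          ring
        refine le_trans (Finset.sum_le_sum hperj) ?_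
        have hgeo : ∑ j ∈ Finset.Ico j0 Mt, ((2:ℝ))⁻¹ ^ j ≤ 2 := by
          have hsub : Finset.Ico j0 Mt ⊆ Finset.range Mt := by
            intro j hj
            exact Finset.mem_range.2 (Finset.mem_Ico.1 hj).2
          refine le_trans (Finset.sum_le_sum_of_subset_of_nonneg hsub
            fun j _ _ => pow_nonneg (by norm_num) _) ?_
          have h11 := sum_geometric_two_le Mt
          simpa [one_div] using h11
        have hite : ∑ j ∈ Finset.Ico j0 Mt, (if j = j0 then E0 else 0) ≤ E0 := by
          rw [Finset.sum_ite_eq' (Finset.Ico j0 Mt) j0 (fun _ => E0)]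
          split
          · exact le_refl E0
          · exact hE00
        calc ∑ j ∈ Finset.Ico j0 Mt,
              (Lsum * ((if j = j0 then E0 else 0) + ((2:ℝ))⁻¹ ^ j)) * (1 + knorm k) ^ (m N - A)
            = Lsum * (∑ j ∈ Finset.Ico j0 Mt, ((if j = j0 then E0 else 0) + ((2:ℝ))⁻¹ ^ j))
                * (1 + knorm k) ^ (m N - A) := by
              rw [← Finset.sum_mul, ← Finset.mul_sum]
          _ ≤ (Lsum * (E0 + 2)) * (1 + knorm k) ^ (m N - A) := by
              apply mul_le_mul_of_nonneg_right _ (hWpos k).le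
              apply mul_le_mul_of_nonneg_left _ hLsum0
              rw [Finset.sum_add_distrib]
              linarith [hgeo, hite]
      refine ⟨(∑ j ∈ Finset.range j0, Cm j) + Lsum * (E0 + 2) + 1, ?_, ?_⟩
      · have h1 : 0 ≤ ∑ j ∈ Finset.range j0, Cm j :=
          Finset.sum_nonneg fun j _ => (hCmpos j).le
        have h2 : 0 ≤ Lsum * (E0 + 2) := mul_nonneg hLsum0 (by linarith)
        linarith
      · intro k x
        have hdecomp : (fun (k : Fin n → ℤ) (x : Fin n → ℝ) =>
              b k x - ∑ j ∈ Finset.range N, a j k x)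
            = fun k' => (∑ j ∈ Finset.range j0, σf j k') + tf k' := by
          funext k' x'
          show b k' x' - ∑ j ∈ Finset.range N, a j k' x'
            = ((∑ j ∈ Finset.range j0, σf j k') + tf k') x'
          rw [Pi.add_apply, Finset.sum_apply]
          have hind : ∑ j ∈ Finset.range j0, (if j < N then (1:ℂ) else 0) * a j k' x'
              = ∑ j ∈ Finset.range N, a j k' x' := by
            rw [← Finset.sum_subset (Finset.range_subset_range.2 (by omega : N ≤ j0))
              (fun j _ hjN => by
                rw [if_neg (by simpa using hjN), zero_mul])]
            exact Finset.sum_congr rfl fun j hj => by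
              rw [if_pos (Finset.mem_range.1 hj), one_mul]
          have hσval : ∑ j ∈ Finset.range j0, σf j k' x'
              = ∑ j ∈ Finset.range j0,
                  (χ j k' * a j k' x' - (if j < N then (1:ℂ) else 0) * a j k' x') := by
            apply Finset.sum_congr rfl
            intro j _
            show (χ j k' - if j < N then (1:ℂ) else 0) * a j k' x' = _
            ring
          rw [hσval, Finset.sum_sub_distrib, hind]
          show _ = (∑ j ∈ Finset.range j0, χ j k' * a j k' x'
              - ∑ j ∈ Finset.range N, a j k' x')
            + (b k' x' - ∑ j ∈ Finset.range j0, χ j k' * a j k' x')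
          ring
        rw [hdecomp]
        have e1 : (fun k' => (∑ j ∈ Finset.range j0, σf j k') + tf k')
            = fun k' => (∑ j ∈ Finset.range j0, σf j k') + tf k' := rfl
        rw [AS.kdiffM_add al (fun k' => ∑ j ∈ Finset.range j0, σf j k') tf k,
          AS.kdiffM_finset_sum al (Finset.range j0) σf k]
        have hk1 : ∀ j ∈ Finset.range j0, ContDiff ℝ (⊤ : ℕ∞) (kdiffM al (σf j) k) :=
          fun j _ => AS.kdiffM_contDiff al (σf j) (hσsm j) k
        have hksum : ContDiff ℝ (⊤ : ℕ∞) (fun x' => ∑ j ∈ Finset.range j0, kdiffM al (σf j) k x') :=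
          ContDiff.sum fun j hj => hk1 j hj
        have hkt : ContDiff ℝ (⊤ : ℕ∞) (kdiffM al tf k) := AS.kdiffM_contDiff al tf htfsm k
        have e2 : (∑ j ∈ Finset.range j0, kdiffM al (σf j) k) + kdiffM al tf k
            = fun x' => (fun x'' => ∑ j ∈ Finset.range j0, kdiffM al (σf j) k x'') x'
              + kdiffM al tf k x' := by
          funext x'
          rw [Pi.add_apply, Finset.sum_apply]
        rw [e2, AS.DFactM_add be hksum hkt]
        have hW0 : (0:ℝ) ≤ (1 + knorm k) ^ (m N - A) := (hWpos k).le
        refine le_trans (norm_add_le _ _) ?_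
        have hts : ‖DFactM be (fun x' => ∑ j ∈ Finset.range j0, kdiffM al (σf j) k x') x‖
            ≤ (∑ j ∈ Finset.range j0, Cm j) * (1 + knorm k) ^ (m N - A) := by
          rw [AS.DFactM_finset_sum be _ _ hk1]
          refine le_trans (norm_sum_le _ _) ?_
          rw [Finset.sum_mul]
          exact Finset.sum_le_sum fun j _ => hCm j k x
        have hht := htail k x
        calc ‖DFactM be (fun x' => ∑ j ∈ Finset.range j0, kdiffM al (σf j) k x') x‖
              + ‖DFactM be (kdiffM al tf k) x‖
            ≤ (∑ j ∈ Finset.range j0, Cm j) * (1 + knorm k) ^ (m N - A)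
              + (Lsum * (E0 + 2)) * (1 + knorm k) ^ (m N - A) := add_le_add hts hht
          _ ≤ ((∑ j ∈ Finset.range j0, Cm j) + Lsum * (E0 + 2) + 1)
              * (1 + knorm k) ^ (m N - A) := by nlinarith [hWpos k]
  have h0 : (fun k x => b k x - ∑ j ∈ Finset.range 0, a j k x) = b := by
    funext k x
    simp
  exact ⟨b, h0 ▸ main 0, main⟩
end

section
/- Let ℋ₁ and ℋ₂ be complex Hilbert spaces, and let P : ℋ₁ → ℋ₂ and Q : ℋ₂ → ℋ₁ be densely defined operators such that (Pu, v)_{ℋ₂} = (u, Qv)_{ℋ₁} for all u ∈ dom(P) and v ∈ dom(Q). Let 𝒯 be the operator on the Hilbert space ℋ₁ ⊕ ℋ₂ with domain dom(P) ⊕ dom(Q) given by 𝒯(u₁, u₂) = (Qu₂, Pu₁). Then the following are equivalent: (i) the closure of P equals the Hilbert-space adjoint Q* of Q, and the closure of Q equals the Hilbert-space adjoint P* of P; (ii) 𝒯 is essentially self-adjoint on dom(P) ⊕ dom(Q), i.e. the closure of 𝒯 is a self-adjoint operator on ℋ₁ ⊕ ℋ₂. -/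
open scoped InnerProductSpace
open WithLp (ofLp toLp)

/-!
The graph of `𝒯` is, after the shuffle `((a₁, a₂), (b₁, b₂)) ↦ ((a₁, b₂), (a₂, b₁))`, the
product of the graphs of `P` and `Q`. This description passes to closures, giving
`(closure P, closure Q)` for `closure 𝒯`, and to adjoints, giving `(Q*, P*)` for `𝒯*`: the inner
product on `ℋ₁ ⊕ ℋ₂` splits, so the two graphs can be tested separately. Since
`(closure 𝒯)* = 𝒯*`, self-adjointness of `closure 𝒯` is the equality `𝒯* = closure 𝒯`, and a
product of nonempty sets determines its factors.
-/

namespace LinearPMap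

variable {𝕜 E F : Type*} [RCLike 𝕜]
  [NormedAddCommGroup E] [InnerProductSpace 𝕜 E] [NormedAddCommGroup F] [InnerProductSpace 𝕜 F]

theorem graph_inj {S T : E →ₗ.[𝕜] F} : S.graph = T.graph ↔ S = T :=
  ⟨eq_of_eq_graph, congrArg graph⟩

theorem mem_graph_adjoint_iff [CompleteSpace E] {T : E →ₗ.[𝕜] F} (hT : Dense (T.domain : Set E))
    {y : F} {w : E} : (y, w) ∈ T†.graph ↔ ∀ x ∈ T.graph, ⟪x.2, y⟫_𝕜 = ⟪x.1, w⟫_𝕜 := by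
  rw [adjoint_graph_eq_graph_adjoint hT, Submodule.mem_adjoint_iff]
  simp only [sub_eq_zero, Prod.forall]

theorem adjoint_closure [CompleteSpace E] {T : E →ₗ.[𝕜] F} (hT : Dense (T.domain : Set E))
    (hc : T.IsClosable) : T.closure† = T† := by
  refine eq_of_eq_graph (Submodule.ext fun ⟨y, w⟩ => ?_)
  rw [mem_graph_adjoint_iff (hT.mono T.le_closure.1), mem_graph_adjoint_iff hT,
    ← hc.graph_closure_eq_closure_graph]
  have hclosed : _root_.IsClosed {x : E × F | ⟪x.2, y⟫_𝕜 = ⟪x.1, w⟫_𝕜} :=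
    isClosed_eq (by fun_prop) (by fun_prop)
  exact ⟨fun h x hx => h x (T.graph.le_topologicalClosure hx),
    fun h x hx => hclosed.closure_subset_iff.2 h hx⟩

theorem isSelfAdjoint_closure_iff [CompleteSpace E] {T : E →ₗ.[𝕜] E}
    (hT : Dense (T.domain : Set E)) (hc : T.IsClosable) :
    IsSelfAdjoint T.closure ↔ T† = T.closure := by
  rw [isSelfAdjoint_def, adjoint_closure hT hc]

theorem IsFormalAdjoint.isClosable [CompleteSpace E] {T : E →ₗ.[𝕜] F} {S : F →ₗ.[𝕜] E}
    (h : T.IsFormalAdjoint S) (hT : Dense (T.domain : Set E)) : S.IsClosable :=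
  (adjoint_isClosed hT).isClosable.leIsClosable (h.le_adjoint hT)

variable (E F) in
/-- `((a₁, a₂), (b₁, b₂)) ↦ ((a₁, b₂), (a₂, b₁))` -/
def offDiagGraphHomeomorph [TopologicalSpace E] [TopologicalSpace F] :
    WithLp 2 (E × F) × WithLp 2 (E × F) ≃ₜ (E × F) × (F × E) :=
  ((WithLp.homeomorphProd 2 E F).prodCongr
    ((WithLp.homeomorphProd 2 E F).trans (Homeomorph.prodComm E F))).trans
    (Homeomorph.prodProdProdComm E F F E)

/-- `T (a₁, a₂) = (Q a₂, P a₁)` on `dom P × dom Q`, stated on graphs. -/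
def IsOffDiagBlock (P : E →ₗ.[𝕜] F) (Q : F →ₗ.[𝕜] E)
    (T : WithLp 2 (E × F) →ₗ.[𝕜] WithLp 2 (E × F)) : Prop :=
  (T.graph : Set _) = offDiagGraphHomeomorph E F ⁻¹' (P.graph ×ˢ Q.graph)

namespace IsOffDiagBlock

variable {P P' : E →ₗ.[𝕜] F} {Q Q' : F →ₗ.[𝕜] E} {T T' : WithLp 2 (E × F) →ₗ.[𝕜] WithLp 2 (E × F)}

theorem mem_graph_iff (h : IsOffDiagBlock P Q T) {a b : WithLp 2 (E × F)} :
    (a, b) ∈ T.graph ↔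
      ((ofLp a).1, (ofLp b).2) ∈ P.graph ∧ ((ofLp a).2, (ofLp b).1) ∈ Q.graph := by
  rw [← SetLike.mem_coe, h]
  rfl

theorem of_apply
    (hTdom : T.domain =
      (P.domain.prod Q.domain).comap (WithLp.linearEquiv 2 𝕜 (E × F)).toLinearMap)
    (hTapp : ∀ (x : T.domain) (h₁ : (ofLp (x : WithLp 2 (E × F))).1 ∈ P.domain)
      (h₂ : (ofLp (x : WithLp 2 (E × F))).2 ∈ Q.domain),
      T x = toLp 2 (Q ⟨_, h₂⟩, P ⟨_, h₁⟩)) :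
    IsOffDiagBlock P Q T := by
  have hmem (a) : a ∈ T.domain ↔ (ofLp a).1 ∈ P.domain ∧ (ofLp a).2 ∈ Q.domain := by
    rw [hTdom]
    rfl
  ext ⟨⟨a₁, a₂⟩, ⟨b₁, b₂⟩⟩
  change _ ↔ (a₁, b₂) ∈ P.graph ∧ (a₂, b₁) ∈ Q.graph
  constructor
  · intro hab
    have ha := mem_domain_iff.2 ⟨_, hab⟩
    obtain ⟨h₁, h₂⟩ := (hmem _).1 ha
    have hb := ((image_iff ha).2 hab).trans (hTapp ⟨_, ha⟩ h₁ h₂)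
    simp only [WithLp.toLp.injEq, Prod.mk.injEq] at hb
    exact ⟨(image_iff h₁).1 hb.2, (image_iff h₂).1 hb.1⟩
  · rintro ⟨hP, hQ⟩
    have h₁ := mem_domain_iff.2 ⟨_, hP⟩
    have h₂ := mem_domain_iff.2 ⟨_, hQ⟩
    have ha : toLp 2 (a₁, a₂) ∈ T.domain := (hmem _).2 ⟨h₁, h₂⟩
    refine (image_iff ha).1 ((hTapp ⟨_, ha⟩ h₁ h₂).trans ?_).symm
    rw [← (image_iff h₁).2 hP, ← (image_iff h₂).2 hQ]

theorem closure (h : IsOffDiagBlock P Q T) (hP : P.IsClosable) (hQ : Q.IsClosable)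
    (hT : T.IsClosable) : IsOffDiagBlock P.closure Q.closure T.closure := by
  rw [IsOffDiagBlock, ← hT.graph_closure_eq_closure_graph, ← hP.graph_closure_eq_closure_graph,
    ← hQ.graph_closure_eq_closure_graph]
  simp only [Submodule.topologicalClosure_coe]
  rw [h, ← closure_prod_eq, Homeomorph.preimage_closure]

theorem adjoint [CompleteSpace E] [CompleteSpace F] (h : IsOffDiagBlock P Q T)
    (hP : Dense (P.domain : Set E)) (hQ : Dense (Q.domain : Set F))
    (hT : Dense (T.domain : Set (WithLp 2 (E × F)))) : IsOffDiagBlock Q† P† T† := by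
  ext ⟨a, b⟩
  change (a, b) ∈ T†.graph ↔
    ((ofLp a).1, (ofLp b).2) ∈ Q†.graph ∧ ((ofLp a).2, (ofLp b).1) ∈ P†.graph
  rw [mem_graph_adjoint_iff hT, mem_graph_adjoint_iff hQ, mem_graph_adjoint_iff hP]
  constructor
  · intro H
    refine ⟨fun v hv => ?_, fun u hu => ?_⟩
    · simpa using H (toLp 2 (0, v.1), toLp 2 (v.2, 0)) (h.mem_graph_iff.2 ⟨P.graph.zero_mem, hv⟩)
    · simpa using H (toLp 2 (u.1, 0), toLp 2 (0, u.2)) (h.mem_graph_iff.2 ⟨hu, Q.graph.zero_mem⟩)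
  · rintro ⟨HQ, HP⟩ ⟨x, y⟩ hxy
    rw [h.mem_graph_iff] at hxy
    simp only [WithLp.prod_inner_apply]
    rw [HQ _ hxy.2, HP _ hxy.1, add_comm]

theorem mono (h : IsOffDiagBlock P Q T) (h' : IsOffDiagBlock P' Q' T') (hP : P ≤ P')
    (hQ : Q ≤ Q') : T ≤ T' := by
  rw [← le_graph_iff, ← SetLike.coe_subset_coe, h, h']
  exact Set.preimage_mono (Set.prod_mono (le_graph_of_le hP) (le_graph_of_le hQ))

theorem eq_iff (h : IsOffDiagBlock P Q T) (h' : IsOffDiagBlock P' Q' T') :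
    T = T' ↔ P = P' ∧ Q = Q' := by
  have hne : ((P.graph : Set (E × F)) ×ˢ (Q.graph : Set (F × E))).Nonempty :=
    ⟨0, P.graph.zero_mem, Q.graph.zero_mem⟩
  rw [← graph_inj, ← SetLike.coe_set_eq, h, h',
    (offDiagGraphHomeomorph E F).surjective.preimage_injective.eq_iff,
    Set.prod_eq_prod_iff_of_nonempty hne, SetLike.coe_set_eq, SetLike.coe_set_eq, graph_inj,
    graph_inj]

end IsOffDiagBlock

end LinearPMap

open LinearPMap

/-- Abstract criterion: densely defined operators `P : ℋ₁ → ℋ₂` and `Q : ℋ₂ → ℋ₁`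
satisfying `(Pu, v) = (u, Qv)` satisfy `closure P = Q*` and `closure Q = P*` if
and only if the block operator `𝒯(u₁,u₂) = (Qu₂, Pu₁)` with domain
`dom P ⊕ dom Q` is essentially self-adjoint on `ℋ₁ ⊕ ℋ₂`. -/
theorem pair_essentially_selfadjoint_iff {H₁ H₂ : Type*}
    [NormedAddCommGroup H₁] [InnerProductSpace ℂ H₁] [CompleteSpace H₁]
    [NormedAddCommGroup H₂] [InnerProductSpace ℂ H₂] [CompleteSpace H₂]
    (P : H₁ →ₗ.[ℂ] H₂) (Q : H₂ →ₗ.[ℂ] H₁)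
    (hP : Dense (P.domain : Set H₁)) (hQ : Dense (Q.domain : Set H₂))
    (hPQ : ∀ (u : P.domain) (v : Q.domain), ⟪P u, (v : H₂)⟫_ℂ = ⟪(u : H₁), Q v⟫_ℂ)
    (T : WithLp 2 (H₁ × H₂) →ₗ.[ℂ] WithLp 2 (H₁ × H₂))
    (hTdom : T.domain = (P.domain.prod Q.domain).comap
      (WithLp.linearEquiv 2 ℂ (H₁ × H₂)).toLinearMap)
    (hTapp : ∀ (x : T.domain)
      (h₁ : (WithLp.equiv 2 (H₁ × H₂) (x : WithLp 2 (H₁ × H₂))).1 ∈ P.domain)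
      (h₂ : (WithLp.equiv 2 (H₁ × H₂) (x : WithLp 2 (H₁ × H₂))).2 ∈ Q.domain),
      T x = (WithLp.equiv 2 (H₁ × H₂)).symm
        (Q ⟨(WithLp.equiv 2 (H₁ × H₂) (x : WithLp 2 (H₁ × H₂))).2, h₂⟩,
         P ⟨(WithLp.equiv 2 (H₁ × H₂) (x : WithLp 2 (H₁ × H₂))).1, h₁⟩)) :
    (P.closure = Q.adjoint ∧ Q.closure = P.adjoint) ↔ IsSelfAdjoint T.closure := by
  have hPQ : P.IsFormalAdjoint Q := hPQ
  have hT : IsOffDiagBlock P Q T := .of_apply hTdom hTapp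
  have hTdense : Dense (T.domain : Set (WithLp 2 (H₁ × H₂))) :=
    hTdom ▸ (hP.prod hQ).preimage (WithLp.homeomorphProd 2 H₁ H₂).isOpenMap
  have hT' : IsOffDiagBlock Q† P† T† := hT.adjoint hP hQ hTdense
  have hTc : T.IsClosable := (adjoint_isClosed hTdense).isClosable.leIsClosable
    (hT.mono hT' (hPQ.symm.le_adjoint hQ) (hPQ.le_adjoint hP))
  rw [isSelfAdjoint_closure_iff hTdense hTc,
    hT'.eq_iff (hT.closure (hPQ.symm.isClosable hQ) (hPQ.isClosable hP) hTc), eq_comm,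
    @eq_comm _ P†, and_comm]
end
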